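/- arXiv:2210.10504 — 5 statements merged into one kernel-verified Lean document; each statement's English description precedes it below -/
import Mathlib

section
/- Let v_1,…,v_m be linearly independent vectors of R^n with 0 ≤ m < n, and let δ > 0. Then there exists T ∈ GL_n(Z) (a linear automorphism of R^n mapping Z^n onto itself) such that dist(T(e_j), v_j) ≤ δ for each j = 1,…,m, where (e_1,…,e_n) is the standard basis. -/
open scoped BigOperators

noncomputable def projDist {n : ℕ} (x y : EuclideanSpace ℝ (Fin n)) : ℝ :=
  Real.sqrt (‖x‖^2 * ‖y‖^2 - (inner ℝ x y : ℝ)^2) / (‖x‖ * ‖y‖)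

noncomputable def distToSub {n : ℕ} (x : EuclideanSpace ℝ (Fin n))
    (V : Submodule ℝ (EuclideanSpace ℝ (Fin n))) : ℝ :=
  ‖(Submodule.orthogonalProjectionOnto Vᗮ x : EuclideanSpace ℝ (Fin n))‖ / ‖x‖

noncomputable def subDist {n : ℕ} (W V : Submodule ℝ (EuclideanSpace ℝ (Fin n))) : ℝ :=
  sSup {d : ℝ | ∃ x ∈ W, x ≠ 0 ∧ d = distToSub x V}

noncomputable def gramVol {n : ℕ} {ι : Type*} [Fintype ι] [DecidableEq ι]
    (v : ι → EuclideanSpace ℝ (Fin n)) : ℝ :=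
  Real.sqrt (Matrix.det (Matrix.of fun i j => (inner ℝ (v i) (v j) : ℝ)))

noncomputable def Theta {n : ℕ} {ι : Type*} [Fintype ι] [DecidableEq ι]
    (v : ι → EuclideanSpace ℝ (Fin n)) : ℝ :=
  gramVol v / ∏ i, ‖v i‖

def IsIntPt {n : ℕ} (x : EuclideanSpace ℝ (Fin n)) : Prop := ∀ i, ∃ k : ℤ, x i = (k : ℝ)

noncomputable def toE {n : ℕ} (x : Fin n → ℤ) : EuclideanSpace ℝ (Fin n) :=
  (WithLp.equiv 2 (Fin n → ℝ)).symm (fun i => (x i : ℝ))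

/-!
Build `T` column by column. If `T` already sends `e_1, …, e_k` close to `v_1, …, v_k`, let
`y = T⁻¹ v_{k+1}` and choose a large `t` with `t y_{k+1}` a prime `p`, and an integer vector `x`
within bounded distance of `t y` whose `(k+2)`-th coordinate is prime to `p`. Then `x` can replace
`e_{k+1}` in a basis of `ℤⁿ` while keeping `e_j` for `j ≠ k+1, k+2`, which gives `S ∈ GL_n(ℤ)`
fixing `e_1, …, e_k` with `S e_{k+1} = x`. Now `T S e_{k+1} = T x` lies within `O(‖T‖ √n)` of
`t v_{k+1}`, so its projective distance to `v_{k+1}` is `O(1/t)`. The coordinate `k+2` exists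
because `m < n`.
-/


section
variable {n : ℕ}

lemma projDist_le_norm_sub_smul_div (x : EuclideanSpace ℝ (Fin n)) {y : EuclideanSpace ℝ (Fin n)}
    (hy : y ≠ 0) {t : ℝ} (ht : t ≠ 0) :
    projDist x y ≤ ‖x - t • y‖ / (|t| * ‖y‖) := by
  have hy' : 0 < ‖y‖ := norm_pos_iff.mpr hy
  have ht' : 0 < |t| := abs_pos.mpr ht
  set c : ℝ := inner ℝ x y
  set N : ℝ := ‖x - t • y‖
  have hN : N ^ 2 = ‖x‖ ^ 2 - 2 * (t * c) + t ^ 2 * ‖y‖ ^ 2 := by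
    rw [norm_sub_sq_real, real_inner_smul_right, norm_smul, Real.norm_eq_abs, mul_pow, sq_abs]
  -- `projDist x y` is the sine `s` of the angle, and `|t| ‖y‖ s`, the distance from `t y` to the
  -- line `ℝ x`, is at most `‖x - t y‖`
  have key : (‖x‖ ^ 2 * ‖y‖ ^ 2 - c ^ 2) * t ^ 2 ≤ (‖x‖ * N) ^ 2 := by
    have : (‖x‖ * N) ^ 2 - (‖x‖ ^ 2 * ‖y‖ ^ 2 - c ^ 2) * t ^ 2 = (‖x‖ ^ 2 - t * c) ^ 2 := by
      rw [mul_pow, hN]; ring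
    nlinarith [sq_nonneg (‖x‖ ^ 2 - t * c)]
  refine div_le_of_le_mul₀ (by positivity) (by positivity) ?_
  rw [show N / (|t| * ‖y‖) * (‖x‖ * ‖y‖) = ‖x‖ * N / |t| by field_simp]
  refine Real.sqrt_le_iff.mpr ⟨by positivity, ?_⟩
  rwa [div_pow, sq_abs, le_div_iff₀ (by positivity)]

lemma IsIntPt.add {x y : EuclideanSpace ℝ (Fin n)} (hx : IsIntPt x) (hy : IsIntPt y) :
    IsIntPt (x + y) := fun i => by
  obtain ⟨a, ha⟩ := hx i
  obtain ⟨b, hb⟩ := hy i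
  exact ⟨a + b, by simp [ha, hb]⟩

lemma IsIntPt.sub {x y : EuclideanSpace ℝ (Fin n)} (hx : IsIntPt x) (hy : IsIntPt y) :
    IsIntPt (x - y) := fun i => by
  obtain ⟨a, ha⟩ := hx i
  obtain ⟨b, hb⟩ := hy i
  exact ⟨a - b, by simp [ha, hb]⟩

lemma IsIntPt.coord_smul {x y : EuclideanSpace ℝ (Fin n)} (hx : IsIntPt x) (hy : IsIntPt y)
    (j : Fin n) : IsIntPt (x j • y) := fun i => by
  obtain ⟨a, ha⟩ := hx j
  obtain ⟨b, hb⟩ := hy i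
  exact ⟨a * b, by simp [ha, hb]⟩

lemma isIntPt_single (j : Fin n) : IsIntPt (EuclideanSpace.single j (1 : ℝ)) := fun i =>
  ⟨if i = j then 1 else 0, by simp [PiLp.single_apply, apply_ite]⟩

@[simp]
lemma toE_apply (x : Fin n → ℤ) (i : Fin n) : toE x i = x i := rfl

lemma isIntPt_toE (x : Fin n → ℤ) : IsIntPt (toE x) := fun i => ⟨x i, rfl⟩

def PreservesIntPts (T : EuclideanSpace ℝ (Fin n) ≃ₗ[ℝ] EuclideanSpace ℝ (Fin n)) : Prop :=
  ∀ x, IsIntPt x ↔ IsIntPt (T x)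

lemma PreservesIntPts.refl : PreservesIntPts (LinearEquiv.refl ℝ (EuclideanSpace ℝ (Fin n))) :=
  fun _ => Iff.rfl

lemma PreservesIntPts.trans {S T : EuclideanSpace ℝ (Fin n) ≃ₗ[ℝ] EuclideanSpace ℝ (Fin n)}
    (hS : PreservesIntPts S) (hT : PreservesIntPts T) : PreservesIntPts (S.trans T) :=
  fun x => (hS x).trans (hT (S x))

lemma preservesIntPts_ofLinearMap
    {f g : EuclideanSpace ℝ (Fin n) →ₗ[ℝ] EuclideanSpace ℝ (Fin n)}
    (h₁ : f ∘ₗ g = LinearMap.id) (h₂ : g ∘ₗ f = LinearMap.id)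
    (hf : ∀ x, IsIntPt x → IsIntPt (f x)) (hg : ∀ x, IsIntPt x → IsIntPt (g x)) :
    PreservesIntPts (LinearEquiv.ofLinearMap f g h₁ h₂) := fun x =>
  ⟨hf x, fun hx => by simpa [← LinearMap.comp_apply, h₂] using hg _ hx⟩

noncomputable def replaceCols (κ κ' : Fin n) (p q : EuclideanSpace ℝ (Fin n)) :
    EuclideanSpace ℝ (Fin n) →ₗ[ℝ] EuclideanSpace ℝ (Fin n) :=
  LinearMap.id + (EuclideanSpace.proj κ : EuclideanSpace ℝ (Fin n) →L[ℝ] ℝ).toLinearMap.smulRight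
      (p - EuclideanSpace.single κ 1) +
    (EuclideanSpace.proj κ' : EuclideanSpace ℝ (Fin n) →L[ℝ] ℝ).toLinearMap.smulRight
      (q - EuclideanSpace.single κ' 1)

lemma replaceCols_apply (κ κ' : Fin n) (p q w : EuclideanSpace ℝ (Fin n)) :
    replaceCols κ κ' p q w =
      w + w κ • (p - EuclideanSpace.single κ 1) + w κ' • (q - EuclideanSpace.single κ' 1) :=
  rfl

lemma replaceCols_apply_apply (κ κ' : Fin n) (p q w : EuclideanSpace ℝ (Fin n)) (i : Fin n) :
    replaceCols κ κ' p q w i =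
      w i + w κ * (p i - if i = κ then 1 else 0) + w κ' * (q i - if i = κ' then 1 else 0) := by
  simp [replaceCols_apply, PiLp.single_apply]

lemma replaceCols_single_left {κ κ' : Fin n} (hne : κ ≠ κ') (p q : EuclideanSpace ℝ (Fin n)) :
    replaceCols κ κ' p q (EuclideanSpace.single κ 1) = p := by
  simp [replaceCols_apply, hne.symm]

lemma replaceCols_single_of_ne {κ κ' i : Fin n} (hi : i ≠ κ) (hi' : i ≠ κ')
    (p q : EuclideanSpace ℝ (Fin n)) :
    replaceCols κ κ' p q (EuclideanSpace.single i 1) = EuclideanSpace.single i 1 := by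
  simp [replaceCols_apply, hi.symm, hi'.symm]

lemma IsIntPt.replaceCols {κ κ' : Fin n} {p q w : EuclideanSpace ℝ (Fin n)} (hp : IsIntPt p)
    (hq : IsIntPt q) (hw : IsIntPt w) : IsIntPt (replaceCols κ κ' p q w) := by
  rw [replaceCols_apply]
  exact (hw.add (hw.coord_smul (hp.sub (isIntPt_single κ)) κ)).add
    (hw.coord_smul (hq.sub (isIntPt_single κ')) κ')

-- With `a x_κ + b x_κ' = 1`, `S` is the identity with columns `κ, κ'` replaced by `x` and `c`,
-- of determinant `a x_κ + b x_κ' = 1`; `x'` and `c'` are the same columns of its inverse.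
lemma exists_preservesIntPts_single_eq_toE {x : Fin n → ℤ} {κ κ' : Fin n} (hne : κ ≠ κ')
    (hx : IsCoprime (x κ) (x κ')) :
    ∃ S : EuclideanSpace ℝ (Fin n) ≃ₗ[ℝ] EuclideanSpace ℝ (Fin n), PreservesIntPts S ∧
      S (EuclideanSpace.single κ 1) = toE x ∧
      ∀ i, i ≠ κ → i ≠ κ' → S (EuclideanSpace.single i 1) = EuclideanSpace.single i 1 := by
  obtain ⟨a, b, hab⟩ := hx
  have hab' : (a : ℝ) * x κ + b * x κ' = 1 := by exact_mod_cast hab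
  let c : Fin n → ℤ := fun i => if i = κ then -b else if i = κ' then a else 0
  let x' : Fin n → ℤ := fun i => if i = κ then a else if i = κ' then -x κ' else -(a * x i)
  let c' : Fin n → ℤ := fun i => if i = κ then b else if i = κ' then x κ else -(b * x i)
  let S := replaceCols κ κ' (toE x) (toE c)
  let S' := replaceCols κ κ' (toE x') (toE c')
  have hSS' : S ∘ₗ S' = LinearMap.id := by
    refine LinearMap.ext fun w => PiLp.ext fun i => ?_
    simp only [S, S', LinearMap.comp_apply, LinearMap.id_apply, replaceCols_apply_apply,
      toE_apply, x', c, c']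
    by_cases hi : i = κ
    · subst hi
      simp [hne, hne.symm]
      linear_combination w i * hab'
    · by_cases hi' : i = κ'
      · subst hi'
        simp [hne, hne.symm]
        linear_combination w i * hab'
      · simp [hi, hi', hne]
        ring
  have hS'S : S' ∘ₗ S = LinearMap.id := mul_eq_one_comm.mp (hSS' : S * S' = 1)
  refine ⟨LinearEquiv.ofLinearMap S S' hSS' hS'S, ?_, ?_, fun i hi hi' => ?_⟩
  · exact preservesIntPts_ofLinearMap _ _
      (fun _ => (isIntPt_toE x).replaceCols (isIntPt_toE c))
      (fun _ => (isIntPt_toE x').replaceCols (isIntPt_toE c'))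
  · exact replaceCols_single_left hne (toE x) (toE c)
  · exact replaceCols_single_of_ne hi hi' (toE x) (toE c)

lemma exists_not_dvd_abs_sub_le_one {p : ℕ} (hp : p.Prime) (r : ℤ) :
    ∃ w : ℤ, ¬ (p : ℤ) ∣ w ∧ |w - r| ≤ 1 := by
  by_cases hr : (p : ℤ) ∣ r
  · refine ⟨r + 1, fun h => ?_, by simp⟩
    have : (p : ℤ) ∣ 1 := (Int.dvd_add_right hr).mp h
    exact hp.one_lt.ne' (by exact_mod_cast Int.eq_one_of_dvd_one (by positivity) this)
  · exact ⟨r, hr, by simp⟩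

-- For `α ≠ 0` take `t = p / α` with `p` a large prime, so that `u = p` is exact and `w` only has
-- to avoid the multiples of `p`.
lemma exists_isCoprime_near_smul (α β T : ℝ) :
    ∃ (t : ℝ) (u w : ℤ), t ≠ 0 ∧ T ≤ |t| ∧ IsCoprime u w ∧ |u - t * α| ≤ 2 ∧ |w - t * β| ≤ 2 := by
  rcases eq_or_ne α 0 with rfl | hα
  · refine ⟨max T 1, 1, round (max T 1 * β), by positivity, ?_, isCoprime_one_left, by simp, ?_⟩
    · exact (le_max_left T 1).trans (le_abs_self _)
    · rw [abs_sub_comm]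
      linarith [abs_sub_round (max T 1 * β)]
  obtain ⟨p, hTp, hp⟩ := Nat.exists_infinite_primes ⌈T * |α|⌉₊
  obtain ⟨w, hpw, hw⟩ := exists_not_dvd_abs_sub_le_one hp (round (p / α * β))
  refine ⟨p / α, p, w, div_ne_zero (by exact_mod_cast hp.ne_zero) hα, ?_,
    (Nat.prime_iff_prime_int.mp hp).coprime_iff_not_dvd.mpr hpw, by simp [div_mul_cancel₀ _ hα], ?_⟩
  · rw [abs_div, Nat.abs_cast, le_div_iff₀ (abs_pos.mpr hα)]
    exact (Nat.le_ceil _).trans (by exact_mod_cast hTp)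
  · have hr := abs_sub_round (p / α * β)
    rw [abs_sub_comm] at hr
    calc |(w : ℝ) - p / α * β|
        ≤ |(w : ℝ) - round (p / α * β)| + |(round (p / α * β) : ℝ) - p / α * β| :=
          abs_sub_le _ _ _
      _ ≤ 2 := by
          have : |(w : ℝ) - round (p / α * β)| ≤ 1 := by exact_mod_cast hw
          linarith

lemma norm_le_sqrt_mul_of_forall_abs_le {w : EuclideanSpace ℝ (Fin n)} {r : ℝ} (hr : 0 ≤ r)
    (h : ∀ i, |w i| ≤ r) : ‖w‖ ≤ √n * r := by
  rw [EuclideanSpace.norm_eq, ← Real.sqrt_sq hr, ← Real.sqrt_mul (Nat.cast_nonneg n)]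
  refine Real.sqrt_le_sqrt ?_
  calc ∑ i, ‖w i‖ ^ 2 ≤ ∑ _i : Fin n, r ^ 2 :=
        Finset.sum_le_sum fun i _ => by
          rw [Real.norm_eq_abs]
          exact pow_le_pow_left₀ (abs_nonneg _) (h i) 2
    _ = n * r ^ 2 := by simp

lemma exists_isCoprime_norm_toE_sub_smul_le (y : EuclideanSpace ℝ (Fin n)) {κ κ' : Fin n}
    (hne : κ ≠ κ') (T : ℝ) :
    ∃ (t : ℝ) (x : Fin n → ℤ), t ≠ 0 ∧ T ≤ |t| ∧ IsCoprime (x κ) (x κ') ∧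
      ‖toE x - t • y‖ ≤ √n * 2 := by
  obtain ⟨t, u, w, ht, hTt, huw, hu, hw⟩ := exists_isCoprime_near_smul (y κ) (y κ') T
  let x : Fin n → ℤ := Function.update (Function.update (fun i => round (t * y i)) κ u) κ' w
  have hxκ : x κ = u := by simp [x, hne]
  have hxκ' : x κ' = w := by simp [x]
  refine ⟨t, x, ht, hTt, hxκ ▸ hxκ' ▸ huw,
    norm_le_sqrt_mul_of_forall_abs_le zero_le_two fun i => ?_⟩
  simp only [PiLp.sub_apply, PiLp.smul_apply, toE_apply, smul_eq_mul]
  by_cases hi' : i = κ'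
  · rwa [hi', hxκ']
  by_cases hi : i = κ
  · rwa [hi, hxκ]
  have hr := abs_sub_round (t * y i)
  rw [abs_sub_comm] at hr
  simp only [x, Function.update_of_ne hi', Function.update_of_ne hi]
  linarith

lemma exists_isCoprime_projDist_le (T : EuclideanSpace ℝ (Fin n) ≃ₗ[ℝ] EuclideanSpace ℝ (Fin n))
    {v : EuclideanSpace ℝ (Fin n)} (hv : v ≠ 0) {δ : ℝ} (hδ : 0 < δ) {κ κ' : Fin n}
    (hne : κ ≠ κ') :
    ∃ x : Fin n → ℤ, IsCoprime (x κ) (x κ') ∧ projDist (T (toE x)) v ≤ δ := by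
  let L := LinearMap.toContinuousLinearMap T.toLinearMap
  have hv' : 0 < ‖v‖ := norm_pos_iff.mpr hv
  obtain ⟨t, x, ht, hTt, hx, hxt⟩ := exists_isCoprime_norm_toE_sub_smul_le (T.symm v) hne
    (‖L‖ * (√n * 2) / (δ * ‖v‖))
  have hTt' : ‖L‖ * (√n * 2) ≤ |t| * (δ * ‖v‖) := (div_le_iff₀ (by positivity)).mp hTt
  refine ⟨x, hx, ?_⟩
  calc projDist (T (toE x)) v ≤ ‖T (toE x) - t • v‖ / (|t| * ‖v‖) :=
        projDist_le_norm_sub_smul_div _ hv ht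
    _ = ‖L (toE x - t • T.symm v)‖ / (|t| * ‖v‖) := by simp [L]
    _ ≤ ‖L‖ * (√n * 2) / (|t| * ‖v‖) := by
        gcongr
        exact L.le_opNorm_of_le hxt
    _ ≤ δ := by
        rw [div_le_iff₀ (by positivity)]
        linarith

end

lemma exists_preservesIntPts_projDist_le {m n : ℕ} (hmn : m < n)
    (v : Fin m → EuclideanSpace ℝ (Fin n)) (hv : ∀ j, v j ≠ 0) {δ : ℝ} (hδ : 0 < δ) :
    ∀ k ≤ m, ∃ T : EuclideanSpace ℝ (Fin n) ≃ₗ[ℝ] EuclideanSpace ℝ (Fin n),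
      PreservesIntPts T ∧ ∀ j : Fin m, (j : ℕ) < k →
        projDist (T (EuclideanSpace.single (Fin.castLE hmn.le j) 1)) (v j) ≤ δ := by
  intro k
  induction k with
  | zero => exact fun _ => ⟨LinearEquiv.refl ℝ _, .refl, fun _ h => absurd h (Nat.not_lt_zero _)⟩
  | succ k ih =>
    intro hk
    obtain ⟨T, hT, hTv⟩ := ih (by omega)
    let κ : Fin n := ⟨k, by omega⟩
    let κ' : Fin n := ⟨k + 1, by omega⟩
    have hne : κ ≠ κ' := by simp [κ, κ', Fin.ext_iff]
    obtain ⟨x, hx, hxv⟩ := exists_isCoprime_projDist_le T (hv ⟨k, hk⟩) hδ hne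
    obtain ⟨S, hS, hSκ, hSfix⟩ := exists_preservesIntPts_single_eq_toE hne hx
    refine ⟨S.trans T, hS.trans hT, fun j hj => ?_⟩
    rcases (Nat.lt_succ_iff_lt_or_eq.mp hj) with hjk | rfl
    · rw [LinearEquiv.trans_apply, hSfix _ (by simp [κ, Fin.ext_iff]; omega)
        (by simp [κ', Fin.ext_iff]; omega)]
      exact hTv j hjk
    · rwa [LinearEquiv.trans_apply, show Fin.castLE hmn.le j = κ from rfl, hSκ]

theorem stmt1 {m n : ℕ} (hmn : m < n) (v : Fin m → EuclideanSpace ℝ (Fin n))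
    (hv : LinearIndependent ℝ v) (δ : ℝ) (hδ : 0 < δ) :
    ∃ T : EuclideanSpace ℝ (Fin n) ≃ₗ[ℝ] EuclideanSpace ℝ (Fin n),
      (∀ x, IsIntPt x ↔ IsIntPt (T x)) ∧
      ∀ j : Fin m,
        projDist (T (EuclideanSpace.single (Fin.castLE hmn.le j) 1)) (v j) ≤ δ := by
  obtain ⟨T, hT, hTv⟩ := exists_preservesIntPts_projDist_le hmn v hv.ne_zero hδ m le_rfl
  exact ⟨T, hT, fun j => hTv j j.isLt⟩
end

section
/- Equivalently stated: for linearly independent vectors v_1,…,v_m of R^n with 0 ≤ m < n and any δ > 0, there exists a basis (x_1,…,x_n) of the lattice Z^n such that dist(x_j, v_j) ≤ δ for each j = 1,…,m. -/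
open scoped BigOperators

/-!
Build the basis one vector at a time, keeping a basis `U` of `ℤⁿ` whose first rows already point,
up to positive factors, almost in the directions of `v₀, …, v_{j-1}`. Write `v_j = ∑ γ_k U_k`;
since `v_j` is independent of the earlier rows, some `γ_a` with `a` a free row is nonzero.
For a large prime `p` put `t = p / |γ_a|` and round `t γ` to an integer vector `c` with `c_a = ± p`
and `c_b` prime to `p`, for a second free row `b`. Then `∑ c_k U_k` is within `∑ ‖U_k‖` of
`t v_j`, so its direction is as close to `v_j` as we like, and since `c_a, c_b` are coprime, a
unimodular change of the rows `a, b` puts it into a basis of `ℤⁿ`. Linear independence is an open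
condition, so the remaining `v`'s stay independent of the rows built so far as long as these are
close enough.
-/

open Function Submodule

section ProjectiveDistance

variable {n : ℕ}

lemma projDist_smul_left (x y : EuclideanSpace ℝ (Fin n)) {t : ℝ} (ht : 0 < t) :
    projDist (t • x) y = projDist x y := by
  unfold projDist
  rw [norm_smul, Real.norm_eq_abs, abs_of_pos ht, real_inner_smul_left,
    show (t * ‖x‖) ^ 2 * ‖y‖ ^ 2 - (t * inner ℝ x y) ^ 2
      = t ^ 2 * (‖x‖ ^ 2 * ‖y‖ ^ 2 - inner ℝ x y ^ 2) by ring,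
    Real.sqrt_mul (sq_nonneg t), Real.sqrt_sq ht.le, mul_assoc, mul_div_mul_left _ _ ht.ne']

lemma projDist_le_norm_sub_div (x y : EuclideanSpace ℝ (Fin n)) :
    projDist x y ≤ ‖x - y‖ / ‖y‖ := by
  unfold projDist
  rcases eq_or_ne ‖x‖ 0 with hx | hx
  · rw [hx, zero_mul, div_zero]
    positivity
  -- `(‖x‖ * ‖x - y‖) ^ 2` exceeds the Gram determinant by `(‖x‖ ^ 2 - ⟪x, y⟫) ^ 2`.
  have hgram : ‖x‖ ^ 2 * ‖y‖ ^ 2 - inner ℝ x y ^ 2 ≤ (‖x‖ * ‖x - y‖) ^ 2 := by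
    rw [mul_pow, norm_sub_sq_real]
    nlinarith [sq_nonneg (‖x‖ ^ 2 - inner ℝ x y)]
  rw [← mul_div_mul_left ‖x - y‖ ‖y‖ hx]
  gcongr
  exact Real.sqrt_le_iff.mpr ⟨by positivity, hgram⟩

end ProjectiveDistance

lemma exists_notMem_ne_zero_of_sum_notMem_span {R M ι : Type*} [Semiring R] [AddCommMonoid M]
    [Module R M] [Fintype ι] {u : ι → M} {γ : ι → R} {S : Set ι}
    (h : ∑ k, γ k • u k ∉ span R (u '' S)) : ∃ a ∉ S, γ a ≠ 0 := by
  contrapose! h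
  refine sum_mem fun k _ => ?_
  by_cases hk : k ∈ S
  · exact smul_mem _ _ (subset_span (Set.mem_image_of_mem u hk))
  · rw [h k hk, zero_smul]
    exact zero_mem _

lemma exists_span_update_update_sum_eq {R M ι : Type*} [CommRing R] [AddCommGroup M] [Module R M]
    [Fintype ι] [DecidableEq ι] (u : ι → M) {a b : ι} (hab : a ≠ b) (c : ι → R)
    (hc : IsCoprime (c a) (c b)) :
    ∃ w : M, span R (Set.range (update (update u b w) a (∑ k, c k • u k))) =
      span R (Set.range u) := by
  obtain ⟨α, β, hαβ⟩ := hc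
  set u' := update (update u b (-β • u a + α • u b)) a (∑ k, c k • u k) with hu'
  have hu'a : u' a = ∑ k, c k • u k := update_self ..
  have hu'b : u' b = -β • u a + α • u b := by rw [hu', update_of_ne hab.symm, update_self]
  have hu'k : ∀ k, k ≠ a → k ≠ b → u' k = u k := fun k ha hb => by
    rw [hu', update_of_ne ha, update_of_ne hb]
  -- Modulo the other rows, the rows `a, b` are transformed by `!![c a, c b; -β, α]`, of
  -- determinant `α * c a + β * c b = 1`.
  refine ⟨-β • u a + α • u b, le_antisymm (span_le.mpr ?_) (span_le.mpr ?_)⟩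
  · rintro _ ⟨k, rfl⟩
    change u' k ∈ _
    have hmem : ∀ k, u k ∈ span R (Set.range u) := fun k => subset_span ⟨k, rfl⟩
    by_cases ha : k = a
    · rw [ha, hu'a]
      exact sum_mem fun k _ => smul_mem _ _ (hmem k)
    by_cases hb : k = b
    · rw [hb, hu'b]
      exact add_mem (smul_mem _ _ (hmem a)) (smul_mem _ _ (hmem b))
    · rw [hu'k k ha hb]
      exact hmem k
  · set N := span R (Set.range u')
    have hmem : ∀ k, u' k ∈ N := fun k => subset_span ⟨k, rfl⟩
    have hsplit : ∑ k, c k • u k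
        = c a • u a + (c b • u b + ∑ k ∈ (Finset.univ.erase a).erase b, c k • u' k) := by
      rw [Finset.sum_congr (s₁ := (Finset.univ.erase a).erase b) rfl fun k hk => by
          rw [hu'k k (Finset.ne_of_mem_erase (Finset.mem_of_mem_erase hk))
            (Finset.ne_of_mem_erase hk)],
        Finset.add_sum_erase _ (fun k => c k • u k)
          (Finset.mem_erase.mpr ⟨hab.symm, Finset.mem_univ b⟩),
        Finset.add_sum_erase _ (fun k => c k • u k) (Finset.mem_univ a)]
    have hy : c a • u a + c b • u b ∈ N := by
      have : c a • u a + c b • u b = u' a - ∑ k ∈ (Finset.univ.erase a).erase b, c k • u' k := by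
        rw [hu'a, hsplit]
        abel
      rw [this]
      exact sub_mem (hmem a) (sum_mem fun k _ => smul_mem _ _ (hmem k))
    rintro _ ⟨k, rfl⟩
    by_cases ha : k = a
    · have : u a = α • (c a • u a + c b • u b) - c b • u' b := by
        rw [hu'b]
        linear_combination (norm := module) (-hαβ) • u a
      rw [ha, this]
      exact sub_mem (smul_mem _ _ hy) (smul_mem _ _ (hmem b))
    by_cases hb : k = b
    · have : u b = β • (c a • u a + c b • u b) + c a • u' b := by
        rw [hu'b]
        linear_combination (norm := module) (-hαβ) • u b
      rw [hb, this]
      exact add_mem (smul_mem _ _ hy) (smul_mem _ _ (hmem b))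
    · rw [← hu'k k ha hb]
      exact hmem k

lemma abs_floor_add_sub_le {x : ℝ} {s : ℤ} (hs : s = 0 ∨ s = 1) :
    |((⌊x⌋ + s : ℤ) : ℝ) - x| ≤ 1 := by
  have h₁ := Int.floor_le x
  have h₂ := Int.lt_floor_add_one x
  rw [abs_le]
  rcases hs with rfl | rfl <;> push_cast <;> constructor <;> linarith

lemma exists_isCoprime_near_smul_s2 {ι : Type*} [DecidableEq ι] (γ : ι → ℝ) {a b : ι} (hab : a ≠ b)
    (ha : γ a ≠ 0) (M : ℝ) :
    ∃ t, M ≤ t ∧ ∃ c : ι → ℤ, IsCoprime (c a) (c b) ∧ ∀ k, |(c k : ℝ) - t * γ k| ≤ 1 := by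
  obtain ⟨p, hMp, hp⟩ := Nat.exists_infinite_primes ⌈M * |γ a|⌉₊
  have hpZ : Prime (p : ℤ) := Nat.prime_iff_prime_int.mp hp
  have hγa : 0 < |γ a| := abs_pos.mpr ha
  set t := (p : ℝ) / |γ a|
  have htM : M ≤ t := by
    rw [le_div_iff₀ hγa]
    exact Nat.ceil_le.mp hMp
  -- `t * γ a = ± p` exactly, and `p` is coprime to one of two consecutive integers.
  set σ : ℤ := if 0 < γ a then p else -p
  have hσ : (σ : ℝ) = t * γ a := by
    unfold σ t
    split_ifs with h
    · rw [abs_of_pos h, div_mul_cancel₀ _ ha, Int.cast_natCast]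
    · rw [abs_of_neg (lt_of_le_of_ne (not_lt.mp h) ha)]
      push_cast
      field_simp
  set s : ℤ := if (p : ℤ) ∣ ⌊t * γ b⌋ then 1 else 0
  have hs : s = 0 ∨ s = 1 := by unfold s; split_ifs <;> simp
  have hndvd : ¬ (p : ℤ) ∣ ⌊t * γ b⌋ + s := by
    unfold s
    split_ifs with h
    · exact fun h' => hpZ.not_dvd_one ((dvd_add_right h).mp h')
    · simpa using h
  have hcop : IsCoprime σ (⌊t * γ b⌋ + s) := by
    have := (hpZ.coprime_iff_not_dvd).mpr hndvd
    unfold σ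
    split_ifs
    exacts [this, this.neg_left]
  refine ⟨t, htM, update (update (fun k => ⌊t * γ k⌋) b (⌊t * γ b⌋ + s)) a σ, ?_, fun k => ?_⟩
  · rwa [update_self, update_of_ne hab.symm, update_self]
  rcases eq_or_ne k a with rfl | hka
  · rw [update_self, hσ, sub_self, abs_zero]
    exact zero_le_one
  rw [update_of_ne hka]
  rcases eq_or_ne k b with rfl | hkb
  · rw [update_self]
    exact abs_floor_add_sub_le hs
  · rw [update_of_ne hkb]
    simpa using abs_floor_add_sub_le (x := t * γ k) (Or.inl rfl)

lemma norm_sum_smul_sub_sum_smul_le {E ι : Type*} [SeminormedAddCommGroup E] [NormedSpace ℝ E]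
    [Fintype ι] (u : ι → E) {a b : ι → ℝ} (h : ∀ k, |a k - b k| ≤ 1) :
    ‖∑ k, a k • u k - ∑ k, b k • u k‖ ≤ ∑ k, ‖u k‖ := by
  rw [← Finset.sum_sub_distrib]
  refine (norm_sum_le _ _).trans (Finset.sum_le_sum fun k _ => ?_)
  rw [← sub_smul, norm_smul, Real.norm_eq_abs]
  exact mul_le_of_le_one_left (norm_nonneg _) (h k)

lemma exists_pos_notMem_span_of_forall_norm_sub_lt {E : Type*} [NormedAddCommGroup E]
    [NormedSpace ℝ E] {m : ℕ} {v : Fin (m + 1) → E} (hv : LinearIndependent ℝ v) :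
    ∃ ε > 0, ∀ y : Fin m → E, (∀ i, ‖y i - v (Fin.castSucc i)‖ < ε) →
      v (Fin.last m) ∉ span ℝ (Set.range y) := by
  obtain ⟨ε, hε, hball⟩ := Metric.eventually_nhds_iff.mp hv.eventually
  refine ⟨ε, hε, fun y hy => ?_⟩
  have hsnoc : LinearIndependent ℝ (Fin.snoc y (v (Fin.last m)) : Fin (m + 1) → E) := by
    refine hball ((dist_pi_lt_iff hε).mpr (Fin.lastCases ?_ fun i => ?_))
    · simpa using hε
    · simpa [dist_eq_norm] using hy i
  exact (linearIndependent_finSnoc.mp hsnoc).2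

section Lattice

variable {n : ℕ}

lemma toE_sum_smul {ι : Type*} [Fintype ι] (c : ι → ℤ) (U : ι → Fin n → ℤ) :
    toE (∑ k, c k • U k) = ∑ k, (c k : ℝ) • toE (U k) := by
  ext i
  simp [toE]

lemma span_toE_eq_top {U : Fin n → Fin n → ℤ} (hU : span ℤ (Set.range U) = ⊤) :
    span ℝ (Set.range (toE ∘ U)) = ⊤ := by
  rw [eq_top_iff, ← (EuclideanSpace.basisFun (Fin n) ℝ).toBasis.span_eq, span_le]
  rintro _ ⟨i, rfl⟩
  obtain ⟨c, hc⟩ := (mem_span_range_iff_exists_fun ℤ).mp (hU ▸ mem_top : Pi.single i 1 ∈ _)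
  have hi : (EuclideanSpace.basisFun (Fin n) ℝ).toBasis i = toE (Pi.single i 1) := by
    ext k
    simp [toE, Pi.single_apply]
  rw [SetLike.mem_coe, hi, ← hc, toE_sum_smul]
  exact sum_mem fun k _ => smul_mem _ _ (subset_span ⟨k, rfl⟩)

lemma exists_span_eq_top_update_near {U : Fin n → Fin n → ℤ} (hU : span ℤ (Set.range U) = ⊤)
    {S : Set (Fin n)} {j r : Fin n} (hjS : j ∉ S) (hrS : r ∉ S) (hjr : j ≠ r)
    {w : EuclideanSpace ℝ (Fin n)} (hw : w ∉ span ℝ (toE ∘ U '' S)) {η : ℝ} (hη : 0 < η) :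
    ∃ U' : Fin n → Fin n → ℤ, span ℤ (Set.range U') = ⊤ ∧ (∀ i ∈ S, U' i = U i) ∧
      ∃ s > (0 : ℝ), ‖s • toE (U' j) - w‖ < η := by
  obtain ⟨γ, rfl⟩ :=
    (mem_span_range_iff_exists_fun ℝ).mp ((span_toE_eq_top hU).symm ▸ mem_top : w ∈ _)
  obtain ⟨a, haS, hγa⟩ := exists_notMem_ne_zero_of_sum_notMem_span hw
  obtain ⟨b, hbS, hab, hj⟩ : ∃ b ∉ S, a ≠ b ∧ (j = a ∨ j = b) := by
    by_cases h : j = a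
    · exact ⟨r, hrS, h ▸ hjr, .inl h⟩
    · exact ⟨j, hjS, Ne.symm h, .inr rfl⟩
  set K := ∑ k, ‖toE (U k)‖
  have hK : 0 ≤ K := Finset.sum_nonneg fun k _ => norm_nonneg _
  obtain ⟨t, htM, c, hcop, hc⟩ := exists_isCoprime_near_smul_s2 γ hab hγa (K / η + 1)
  have ht : 0 < t := lt_of_lt_of_le (by positivity) htM
  obtain ⟨q, hqS, hjq, hcop⟩ : ∃ q ∉ S, j ≠ q ∧ IsCoprime (c j) (c q) := by
    rcases hj with rfl | rfl
    exacts [⟨b, hbS, hab, hcop⟩, ⟨a, haS, hab.symm, hcop.symm⟩]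
  obtain ⟨w', hw'⟩ := exists_span_update_update_sum_eq U hjq c hcop
  refine ⟨update (update U q w') j (∑ k, c k • U k), hw'.trans hU, fun i hi => ?_,
    t⁻¹, inv_pos.mpr ht, ?_⟩
  · rw [update_of_ne (ne_of_mem_of_not_mem hi hjS), update_of_ne (ne_of_mem_of_not_mem hi hqS)]
  have hclose : ‖∑ k, (c k : ℝ) • toE (U k) - t • ∑ k, γ k • (toE ∘ U) k‖ ≤ K := by
    rw [Finset.smul_sum]
    simp_rw [smul_smul]
    exact norm_sum_smul_sub_sum_smul_le _ hc
  rw [update_self, toE_sum_smul]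
  calc ‖t⁻¹ • ∑ k, (c k : ℝ) • toE (U k) - ∑ k, γ k • (toE ∘ U) k‖
      = t⁻¹ * ‖∑ k, (c k : ℝ) • toE (U k) - t • ∑ k, γ k • (toE ∘ U) k‖ := by
        rw [← norm_smul_of_nonneg (inv_pos.mpr ht).le, smul_sub, inv_smul_smul₀ ht.ne']
    _ ≤ t⁻¹ * K := by gcongr
    _ < η := by
        rw [inv_mul_lt_iff₀ ht]
        rw [div_add_one hη.ne', div_le_iff₀ hη] at htM
        linarith

end Lattice

theorem exists_span_eq_top_forall_near_smul {m n : ℕ} (hmn : m < n)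
    {v : Fin m → EuclideanSpace ℝ (Fin n)} (hv : LinearIndependent ℝ v) {ε : Fin m → ℝ}
    (hε : ∀ i, 0 < ε i) :
    ∃ U : Fin n → Fin n → ℤ, span ℤ (Set.range U) = ⊤ ∧
      ∀ i, ∃ s > (0 : ℝ), ‖s • toE (U (Fin.castLE hmn.le i)) - v i‖ < ε i := by
  induction m with
  | zero => exact ⟨Pi.basisFun ℤ (Fin n), (Pi.basisFun ℤ (Fin n)).span_eq, fun i => i.elim0⟩
  | succ m ih =>
    obtain ⟨ε₀, hε₀, hnear⟩ := exists_pos_notMem_span_of_forall_norm_sub_lt hv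
    obtain ⟨U, hU, hUv⟩ := ih (by omega) (linearIndependent_finSucc'.mp hv).1
      (ε := fun i => min (ε i.castSucc) ε₀) fun i => lt_min (hε _) hε₀
    choose s hs hsU using hUv
    have hw : v (Fin.last m) ∉ span ℝ (toE ∘ U '' Set.range (Fin.castLE (by omega : m ≤ n))) := by
      rw [← Set.range_comp]
      refine fun hmem => hnear (fun i => s i • toE (U (Fin.castLE _ i)))
        (fun i => (hsU i).trans_le (min_le_right _ _)) (span_le.mpr ?_ hmem)
      rintro _ ⟨i, rfl⟩
      rw [SetLike.mem_coe, Function.comp_apply,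
        ← inv_smul_smul₀ (hs i).ne' ((toE ∘ U) (Fin.castLE _ i))]
      exact smul_mem _ _ (subset_span ⟨i, rfl⟩)
    obtain ⟨U', hU', hU'U, t, ht, htU'⟩ :=
      exists_span_eq_top_update_near hU (j := ⟨m, by omega⟩) (r := ⟨m + 1, hmn⟩)
        (by simp) (by simp) (by simp) hw (hε (Fin.last m))
    refine ⟨U', hU', Fin.lastCases ⟨t, ht, htU'⟩ fun i => ⟨s i, hs i, ?_⟩⟩
    rw [Fin.castLE_castSucc, hU'U _ ⟨i, rfl⟩]
    exact (hsU i).trans_le (min_le_left _ _)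

theorem stmt2 {m n : ℕ} (hmn : m < n) (v : Fin m → EuclideanSpace ℝ (Fin n))
    (hv : LinearIndependent ℝ v) (δ : ℝ) (hδ : 0 < δ) :
    ∃ x : Fin n → Fin n → ℤ,
      (∀ y : Fin n → ℤ, ∃ c : Fin n → ℤ, ∀ i, y i = ∑ j, c j * x j i) ∧
      ∀ j : Fin m, projDist (toE (x (Fin.castLE hmn.le j))) (v j) ≤ δ := by
  have hv0 : ∀ j, 0 < ‖v j‖ := fun j => norm_pos_iff.mpr (hv.ne_zero j)
  obtain ⟨U, hU, hUv⟩ :=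
    exists_span_eq_top_forall_near_smul hmn hv (ε := fun j => δ * ‖v j‖) fun j => mul_pos hδ (hv0 j)
  refine ⟨U, fun y => ?_, fun j => ?_⟩
  · obtain ⟨c, hc⟩ := (mem_span_range_iff_exists_fun ℤ).mp (hU ▸ mem_top : y ∈ span ℤ _)
    exact ⟨c, fun i => by simp [← hc, Finset.sum_apply]⟩
  · obtain ⟨s, hs, hsU⟩ := hUv j
    rw [← projDist_smul_left _ _ hs]
    refine (projDist_le_norm_sub_div _ _).trans ?_
    rw [div_le_iff₀ (hv0 j)]
    exact hsU.le
end

section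
/- Let E_1 = span(e_1,…,e_s) and E_2 = span(e_r,…,e_t) be coordinate subspaces of R^n with r ≤ s (so E_1 ∩ E_2 ≠ {0}). Then every nonzero x ∈ R^n satisfies dist(x, E_1 ∩ E_2) ≤ dist(x, E_1) + dist(x, E_2). -/
/-! Orthogonal projection onto a coordinate subspace keeps the coordinates indexed by the subspace
and zeroes the others, so the projections `P₁`, `P₂` onto `E₁`, `E₂` commute and `P₁ P₂` is the
projection onto `E₁ ⊓ E₂`. Then `x - P₁ P₂ x = (x - P₁ x) + P₁ (x - P₂ x)`, and since `P₁` does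
not increase norms, `‖x - P₁ P₂ x‖ ≤ ‖x - P₁ x‖ + ‖x - P₂ x‖`; dividing by `‖x‖` gives the claim. -/

open scoped BigOperators

open Submodule

section
variable {𝕜 E : Type*} [RCLike 𝕜] [NormedAddCommGroup E] [InnerProductSpace 𝕜 E]

theorem norm_sub_starProjection_le_of_starProjection_eq_comp {K L M : Submodule 𝕜 E}
    [K.HasOrthogonalProjection] [L.HasOrthogonalProjection] [M.HasOrthogonalProjection]
    (h : ∀ x, M.starProjection x = K.starProjection (L.starProjection x)) (x : E) :
    ‖x - M.starProjection x‖ ≤ ‖x - K.starProjection x‖ + ‖x - L.starProjection x‖ := by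
  calc ‖x - M.starProjection x‖
      = ‖(x - K.starProjection x) + K.starProjection (x - L.starProjection x)‖ := by
        rw [h, map_sub, sub_add_sub_cancel]
    _ ≤ ‖x - K.starProjection x‖ + ‖K.starProjection (x - L.starProjection x)‖ := norm_add_le _ _
    _ ≤ ‖x - K.starProjection x‖ + ‖x - L.starProjection x‖ := by
        gcongr; exact K.norm_starProjection_apply_le _

end

namespace EuclideanSpace

variable {𝕜 ι : Type*} [RCLike 𝕜] [Fintype ι] [DecidableEq ι]

theorem mem_span_single_image_iff {S : Set ι} {x : EuclideanSpace 𝕜 ι} :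
    x ∈ span 𝕜 ((fun i => single i (1 : 𝕜)) '' S) ↔ ∀ i, x i ≠ 0 → i ∈ S := by
  simp_rw [← basisFun_apply, ← OrthonormalBasis.coe_toBasis, Module.Basis.mem_span_image]
  simp only [Set.subset_def, SetLike.mem_coe, Finsupp.mem_support_iff,
    OrthonormalBasis.coe_toBasis_repr_apply, basisFun_repr]

theorem span_single_image_inf (S T : Set ι) :
    span 𝕜 ((fun i => single i (1 : 𝕜)) '' S) ⊓ span 𝕜 ((fun i => single i (1 : 𝕜)) '' T) =
      span 𝕜 ((fun i => single i (1 : 𝕜)) '' (S ∩ T)) := by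
  ext x
  simp only [mem_inf, mem_span_single_image_iff, Set.mem_inter_iff, imp_and, forall_and]

theorem starProjection_span_single_image (S : Set ι) (x : EuclideanSpace 𝕜 ι) :
    (span 𝕜 ((fun i => single i (1 : 𝕜)) '' S)).starProjection x =
      WithLp.toLp 2 (S.indicator x) := by
  refine eq_starProjection_of_mem_of_inner_eq_zero ?_ fun w hw => ?_
  · exact mem_span_single_image_iff.2 fun i hi =>
      by_contra fun hS => hi (Set.indicator_of_notMem hS _)
  · rw [mem_span_single_image_iff] at hw
    rw [PiLp.inner_apply]
    refine Finset.sum_eq_zero fun i _ => ?_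
    by_cases hi : i ∈ S
    · simp [Set.indicator_of_mem hi]
    · simp [not_imp_comm.mp (hw i) hi]

theorem starProjection_span_single_image_inter (S T : Set ι) (x : EuclideanSpace 𝕜 ι) :
    (span 𝕜 ((fun i => single i (1 : 𝕜)) '' (S ∩ T))).starProjection x =
      (span 𝕜 ((fun i => single i (1 : 𝕜)) '' S)).starProjection
        ((span 𝕜 ((fun i => single i (1 : 𝕜)) '' T)).starProjection x) := by
  simp only [starProjection_span_single_image, Set.indicator_indicator]

end EuclideanSpace

theorem distToSub_eq {n : ℕ} (x : EuclideanSpace ℝ (Fin n))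
    (V : Submodule ℝ (EuclideanSpace ℝ (Fin n))) :
    distToSub x V = ‖x - V.starProjection x‖ / ‖x‖ := by
  rw [distToSub, orthogonalProjectionOnto_orthogonal]

theorem stmt5_general {n r s t : ℕ}
    (E₁ E₂ : Submodule ℝ (EuclideanSpace ℝ (Fin n)))
    (hE₁ : E₁ = Submodule.span ℝ
      ((fun i : Fin n => EuclideanSpace.single i (1 : ℝ)) '' {i : Fin n | (i : ℕ) < s}))
    (hE₂ : E₂ = Submodule.span ℝ
      ((fun i : Fin n => EuclideanSpace.single i (1 : ℝ)) ''
        {i : Fin n | r ≤ (i : ℕ) + 1 ∧ (i : ℕ) + 1 ≤ t})) :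
    ∀ x : EuclideanSpace ℝ (Fin n), x ≠ 0 →
      distToSub x (E₁ ⊓ E₂) ≤ distToSub x E₁ + distToSub x E₂ := by
  intro x _
  rw [hE₁, hE₂, EuclideanSpace.span_single_image_inf, distToSub_eq, distToSub_eq, distToSub_eq,
    ← add_div]
  gcongr
  exact norm_sub_starProjection_le_of_starProjection_eq_comp
    (EuclideanSpace.starProjection_span_single_image_inter _ _) x

theorem stmt5 {n r s t : ℕ} (hr : 1 ≤ r) (hrs : r ≤ s) (hsn : s ≤ n)
    (hrt : r ≤ t) (htn : t ≤ n)
    (E₁ E₂ : Submodule ℝ (EuclideanSpace ℝ (Fin n)))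
    (hE₁ : E₁ = Submodule.span ℝ
      ((fun i : Fin n => EuclideanSpace.single i (1 : ℝ)) '' {i : Fin n | (i : ℕ) < s}))
    (hE₂ : E₂ = Submodule.span ℝ
      ((fun i : Fin n => EuclideanSpace.single i (1 : ℝ)) ''
        {i : Fin n | r ≤ (i : ℕ) + 1 ∧ (i : ℕ) + 1 ≤ t})) :
    ∀ x : EuclideanSpace ℝ (Fin n), x ≠ 0 →
      distToSub x (E₁ ⊓ E₂) ≤ distToSub x E₁ + distToSub x E₂ :=
  stmt5_general E₁ E₂ hE₁ hE₂
end

section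
/- Let v = (v_1,…,v_m) be a linearly independent m-tuple in R^n, let 0 ≤ δ < Θ(v)/(2m), and let x = (x_1,…,x_m) be nonzero vectors with dist(x_j, v_j) ≤ δ for each j. Set W = span(x_1,…,x_m) and V = span(v_1,…,v_m). Then dist(W,V) ≤ 2mδ/Θ(x), where dist(W,V) is the maximum of dist(x,V) over nonzero x ∈ W. -/
open scoped BigOperators

/-!
Write `w ∈ W` as `∑ cᵢ xᵢ`. Cramer's rule for Gram determinants gives `|cᵢ| ‖xᵢ‖ Θ(x) ≤ ‖w‖`,
and each `xᵢ` makes an angle at most `δ` with `vᵢ ∈ V`, so the component of `w` orthogonal to `V`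
has norm at most `m δ ‖w‖ / Θ(x)`. It remains to see `Θ(x) > 0`. By the base-times-height formula
the Gram volume of unit vectors is 1-Lipschitz in each vector, so replacing the (suitably signed)
normalized `vᵢ` by the normalized `xᵢ` one at a time gives `Θ(v) ≤ Θ(x) + √2 m δ`, while
`√2 m δ < 2 m δ < Θ(v)`.
-/

open Matrix Finset Function Submodule

section

variable {n : ℕ} {ι : Type*} [Fintype ι]

local notation "E" => EuclideanSpace ℝ (Fin n)

lemma gramVol_eq_sqrt_det_gram [DecidableEq ι] (u : ι → E) : gramVol u = √(gram ℝ u).det := rfl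

lemma gramVol_nonneg [DecidableEq ι] (u : ι → E) : 0 ≤ gramVol u := Real.sqrt_nonneg _

lemma gram_sum_smul (u : ι → E) (A : Matrix ι ι ℝ) :
    gram ℝ (fun i => ∑ k, A k i • u k) = Aᵀ * gram ℝ u * A := by
  ext i j
  simp only [gram_apply, mul_apply, transpose_apply, sum_inner, inner_sum, real_inner_smul_left,
    real_inner_smul_right, Finset.sum_mul]
  exact Finset.sum_congr rfl fun _ _ => Finset.sum_congr rfl fun _ _ => by ring

lemma det_gram_update_sum_smul [DecidableEq ι] (u : ι → E) (j : ι) (d : ι → ℝ) :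
    (gram ℝ (update u j (∑ k, d k • u k))).det = d j ^ 2 * (gram ℝ u).det := by
  have hA : update u j (∑ k, d k • u k) = fun i => ∑ k, (updateCol 1 j d) k i • u k := by
    ext1 i
    rcases eq_or_ne i j with rfl | hij
    · simp
    · simp [hij, one_apply]
  have hdet : (updateCol (1 : Matrix ι ι ℝ) j d).det = d j := by
    rw [← cramer_apply, cramer_one]
    rfl
  rw [hA, gram_sum_smul, det_mul, det_mul, det_transpose, hdet]
  ring

lemma gramVol_update_sum_smul [DecidableEq ι] (u : ι → E) (j : ι) (d : ι → ℝ) :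
    gramVol (update u j (∑ k, d k • u k)) = |d j| * gramVol u := by
  rw [gramVol_eq_sqrt_det_gram, gramVol_eq_sqrt_det_gram, det_gram_update_sum_smul,
    Real.sqrt_mul (sq_nonneg _), Real.sqrt_sq_eq_abs]

lemma gramVol_smul [DecidableEq ι] (u : ι → E) (c : ι → ℝ) :
    gramVol (fun i => c i • u i) = (∏ i, |c i|) * gramVol u := by
  have h : gram ℝ (fun i => c i • u i) = diagonal c * gram ℝ u * diagonal c := by
    ext i j
    simp [gram_apply, real_inner_smul_left, real_inner_smul_right, diagonal_mul, mul_diagonal]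
    ring
  rw [gramVol_eq_sqrt_det_gram, gramVol_eq_sqrt_det_gram, h, det_mul, det_mul, det_diagonal,
    show (∏ i, c i) * (gram ℝ u).det * ∏ i, c i = (∏ i, c i) ^ 2 * (gram ℝ u).det by ring,
    Real.sqrt_mul (sq_nonneg _), Real.sqrt_sq_eq_abs, Finset.abs_prod]

lemma gramVol_comp_equiv {κ : Type*} [Fintype κ] [DecidableEq ι] [DecidableEq κ] (u : ι → E)
    (e : κ ≃ ι) : gramVol (u ∘ e) = gramVol u :=
  congrArg Real.sqrt (det_submatrix_equiv_self e (gram ℝ u))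

lemma det_gram_update_add_of_mem_span {r : ℕ} (u : Fin (r + 1) → E) (j : Fin (r + 1)) (a : E)
    {p : E} (hp : p ∈ span ℝ (Set.range (u ∘ j.succAbove))) :
    (gram ℝ (update u j (a + p))).det = (gram ℝ (update u j a)).det := by
  obtain ⟨c, rfl⟩ := (mem_span_range_iff_exists_fun ℝ).1 hp
  have h := det_gram_update_sum_smul (update u j a) j (j.insertNth 1 c)
  rw [Fin.sum_univ_succAbove _ j] at h
  simpa [Fin.succAbove_ne] using h

lemma det_gram_update_of_mem_orthogonal {r : ℕ} (u : Fin (r + 1) → E) (j : Fin (r + 1)) {q : E}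
    (hq : q ∈ (span ℝ (Set.range (u ∘ j.succAbove)))ᗮ) :
    (gram ℝ (update u j q)).det = (gram ℝ (u ∘ j.succAbove)).det * ‖q‖ ^ 2 := by
  have horth : ∀ k, inner ℝ q (u (j.succAbove k)) = 0 := fun k =>
    inner_eq_zero_symm.1 (hq _ (subset_span (Set.mem_range_self k)))
  have hminor : (gram ℝ (update u j q)).submatrix j.succAbove j.succAbove =
      gram ℝ (u ∘ j.succAbove) := by
    ext k l
    simp [gram_apply, Fin.succAbove_ne]
  rw [det_succ_row _ j, Fin.sum_univ_succAbove _ j, hminor]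
  simp [gram_apply, Fin.succAbove_ne, horth, mul_comm]

lemma gramVol_update {r : ℕ} (u : Fin (r + 1) → E) (j : Fin (r + 1)) (a : E) :
    gramVol (update u j a) =
      gramVol (u ∘ j.succAbove) * ‖(span ℝ (Set.range (u ∘ j.succAbove)))ᗮ.starProjection a‖ := by
  set K := span ℝ (Set.range (u ∘ j.succAbove))
  have hdecomp : a = Kᗮ.starProjection a + K.starProjection a := by
    rw [add_comm, starProjection_add_starProjection_orthogonal]
  conv_lhs => rw [hdecomp]
  rw [gramVol_eq_sqrt_det_gram, gramVol_eq_sqrt_det_gram,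
    det_gram_update_add_of_mem_span _ _ _ (K.starProjection_apply_mem a),
    det_gram_update_of_mem_orthogonal _ _ (Kᗮ.starProjection_apply_mem a),
    Real.sqrt_mul ((posSemidef_gram ℝ _).det_nonneg), Real.sqrt_sq (norm_nonneg _)]

lemma gramVol_fin_le_prod_norm : ∀ {r : ℕ} (u : Fin r → E), gramVol u ≤ ∏ i, ‖u i‖
  | 0, u => by simp [gramVol_eq_sqrt_det_gram]
  | r + 1, u => by
    calc gramVol u = gramVol (update u 0 (u 0)) := by rw [update_eq_self]
      _ = gramVol (u ∘ Fin.succAbove 0) *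
          ‖(span ℝ (Set.range (u ∘ Fin.succAbove 0)))ᗮ.starProjection (u 0)‖ := gramVol_update ..
      _ ≤ (∏ i, ‖u (Fin.succAbove 0 i)‖) * ‖u 0‖ :=
          mul_le_mul (gramVol_fin_le_prod_norm _) (norm_starProjection_apply_le _ _)
            (norm_nonneg _) (prod_nonneg fun _ _ => norm_nonneg _)
      _ = ∏ i, ‖u i‖ := by rw [Fin.prod_univ_succAbove _ 0, mul_comm]

lemma gramVol_le_prod_norm [DecidableEq ι] (u : ι → E) : gramVol u ≤ ∏ i, ‖u i‖ := by
  rw [← gramVol_comp_equiv u (Fintype.equivFin ι).symm]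
  refine (gramVol_fin_le_prod_norm _).trans_eq ?_
  exact (Fintype.equivFin ι).symm.prod_comp fun i => ‖u i‖

lemma gramVol_update_le {r : ℕ} (u : Fin (r + 1) → E) (j : Fin (r + 1)) (a b : E) :
    gramVol (update u j a) ≤ gramVol (update u j b) + gramVol (u ∘ j.succAbove) * ‖a - b‖ := by
  set P := (span ℝ (Set.range (u ∘ j.succAbove)))ᗮ.starProjection
  have h : ‖P a‖ ≤ ‖P b‖ + ‖a - b‖ := by
    calc ‖P a‖ = ‖P b + P (a - b)‖ := by rw [map_sub, add_sub_cancel]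
      _ ≤ ‖P b‖ + ‖a - b‖ :=
          (norm_add_le _ _).trans (add_le_add le_rfl (norm_starProjection_apply_le _ _))
  rw [gramVol_update, gramVol_update, ← mul_add]
  exact mul_le_mul_of_nonneg_left h (gramVol_nonneg _)

lemma gramVol_le_add_sum_norm_sub {r : ℕ} (u w : Fin r → E) (hu : ∀ i, ‖u i‖ ≤ 1)
    (hw : ∀ i, ‖w i‖ ≤ 1) : gramVol u ≤ gramVol w + ∑ i, ‖u i - w i‖ := by
  suffices h : ∀ s : Finset (Fin r), gramVol u ≤ gramVol (s.piecewise w u) + ∑ i ∈ s, ‖u i - w i‖ by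
    simpa using h univ
  intro s
  induction s using Finset.induction_on with
  | empty => simp
  | insert j s hj ih =>
    rcases r with _ | r
    · exact j.elim0
    set h := s.piecewise w u
    have hh : ∀ i, ‖h i‖ ≤ 1 := fun i => by
      by_cases hi : i ∈ s <;> simp [h, hi, hu, hw]
    have hminor : gramVol (h ∘ j.succAbove) ≤ 1 :=
      (gramVol_le_prod_norm _).trans (prod_le_one (fun _ _ => norm_nonneg _) fun k _ => hh _)
    have hstep : gramVol h ≤ gramVol (update h j (w j)) + ‖u j - w j‖ := by
      calc gramVol h = gramVol (update h j (u j)) := by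
            rw [← s.piecewise_eq_of_notMem w u hj, update_eq_self]
        _ ≤ gramVol (update h j (w j)) + gramVol (h ∘ j.succAbove) * ‖u j - w j‖ :=
            gramVol_update_le ..
        _ ≤ gramVol (update h j (w j)) + ‖u j - w j‖ := by
            gcongr
            exact mul_le_of_le_one_left (norm_nonneg _) hminor
    rw [piecewise_insert, sum_insert hj]
    linarith

lemma Theta_nonneg [DecidableEq ι] (u : ι → E) : 0 ≤ Theta u :=
  div_nonneg (gramVol_nonneg u) (prod_nonneg fun _ _ => norm_nonneg _)

lemma Theta_eq_zero_of_eq_zero [DecidableEq ι] {u : ι → E} {j : ι} (hj : u j = 0) :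
    Theta u = 0 := by
  simp [Theta, prod_eq_zero (f := fun i => ‖u i‖) (mem_univ j) (by simp [hj])]

lemma Theta_smul [DecidableEq ι] (u : ι → E) {c : ι → ℝ} (hc : ∀ i, c i ≠ 0) :
    Theta (fun i => c i • u i) = Theta u := by
  simp only [Theta, gramVol_smul, norm_smul, Real.norm_eq_abs, prod_mul_distrib]
  exact mul_div_mul_left _ _ (prod_ne_zero_iff.2 fun i _ => abs_ne_zero.2 (hc i))

lemma Theta_of_norm_eq_one [DecidableEq ι] {u : ι → E} (hu : ∀ i, ‖u i‖ = 1) :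
    Theta u = gramVol u := by
  simp [Theta, hu]

lemma abs_mul_norm_mul_Theta_le [DecidableEq ι] (x : ι → E) (c : ι → ℝ) (i : ι) :
    |c i| * ‖x i‖ * Theta x ≤ ‖∑ k, c k • x k‖ := by
  set w := ∑ k, c k • x k
  have hcramer : |c i| * gramVol x ≤ ‖w‖ * ∏ k ∈ univ.erase i, ‖x k‖ := by
    rw [← gramVol_update_sum_smul]
    refine (gramVol_le_prod_norm _).trans_eq ?_
    rw [← mul_prod_erase univ _ (mem_univ i), update_self]
    congr 1
    exact prod_congr rfl fun k hk => by rw [update_of_ne (ne_of_mem_erase hk)]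
  have hkey : |c i| * ‖x i‖ * gramVol x ≤ ‖w‖ * ∏ k, ‖x k‖ := by
    rw [← mul_prod_erase univ _ (mem_univ i)]
    nlinarith [norm_nonneg (x i)]
  rcases (prod_nonneg fun k (_ : k ∈ univ) => norm_nonneg (x k)).eq_or_lt with h0 | hpos
  · simp [Theta, ← h0]
  · rw [Theta, ← mul_div_assoc, div_le_iff₀ hpos]
    exact hkey

lemma distToSub_nonneg (x : E) (V : Submodule ℝ E) : 0 ≤ distToSub x V :=
  div_nonneg (norm_nonneg _) (norm_nonneg _)

lemma distToSub_mul_Theta_le [DecidableEq ι] (V : Submodule ℝ E) (x : ι → E) {w : E}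
    (hw : w ∈ span ℝ (Set.range x)) : distToSub w V * Theta x ≤ ∑ i, distToSub (x i) V := by
  obtain ⟨c, rfl⟩ := (mem_span_range_iff_exists_fun ℝ).1 hw
  set w := ∑ k, c k • x k
  set P := Vᗮ.starProjection
  have hterm : ∀ i, |c i| * ‖P (x i)‖ * Theta x ≤ ‖w‖ * distToSub (x i) V := by
    intro i
    rcases eq_or_ne (x i) 0 with h | h
    · simp [h, distToSub]
    · rw [distToSub, ← starProjection_apply]
      calc |c i| * ‖P (x i)‖ * Theta x = |c i| * ‖x i‖ * Theta x * (‖P (x i)‖ / ‖x i‖) := by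
            field_simp
        _ ≤ ‖w‖ * (‖P (x i)‖ / ‖x i‖) :=
            mul_le_mul_of_nonneg_right (abs_mul_norm_mul_Theta_le x c i) (by positivity)
  have hP : ‖P w‖ * Theta x ≤ ‖w‖ * ∑ i, distToSub (x i) V := by
    calc ‖P w‖ * Theta x = ‖∑ i, c i • P (x i)‖ * Theta x := by simp [w, map_sum, map_smul]
      _ ≤ (∑ i, |c i| * ‖P (x i)‖) * Theta x := by
          gcongr
          · exact Theta_nonneg x
          refine (norm_sum_le _ _).trans_eq ?_
          simp [norm_smul]
      _ ≤ ‖w‖ * ∑ i, distToSub (x i) V := by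
          rw [sum_mul, mul_sum]
          exact sum_le_sum fun i _ => hterm i
  rcases eq_or_ne w 0 with h0 | h0
  · rw [h0]
    simpa [distToSub] using sum_nonneg fun i _ => distToSub_nonneg (x i) V
  · rw [distToSub, ← starProjection_apply, div_mul_eq_mul_div, div_le_iff₀ (norm_pos_iff.2 h0)]
    linarith

lemma norm_sub_smul_eq_sqrt (x : E) {v : E} (hv : v ≠ 0) :
    ‖x - (inner ℝ x v / ‖v‖ ^ 2) • v‖ = √(‖x‖ ^ 2 * ‖v‖ ^ 2 - inner ℝ x v ^ 2) / ‖v‖ := by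
  have hvn : 0 < ‖v‖ := norm_pos_iff.2 hv
  rw [eq_div_iff hvn.ne', ← Real.sqrt_sq (by positivity : 0 ≤ ‖x - _‖ * ‖v‖)]
  congr 1
  rw [mul_pow, norm_sub_sq_real, real_inner_smul_right, norm_smul, mul_pow, Real.norm_eq_abs,
    sq_abs]
  field_simp
  ring

lemma distToSub_le_projDist {V : Submodule ℝ E} {v : E} (hv : v ∈ V) (hv0 : v ≠ 0) (x : E) :
    distToSub x V ≤ projDist x v := by
  set y := (inner ℝ x v / ‖v‖ ^ 2) • v
  have hP : ‖Vᗮ.starProjection x‖ ≤ ‖x - y‖ :=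
    calc ‖Vᗮ.starProjection x‖ = ‖Vᗮ.starProjection (x - y)‖ := by
          rw [map_sub, starProjection_orthogonal_apply_eq_zero (V.smul_mem _ hv), sub_zero]
      _ ≤ ‖x - y‖ := norm_starProjection_apply_le _ _
  rw [distToSub, ← starProjection_apply, projDist]
  calc ‖Vᗮ.starProjection x‖ / ‖x‖ ≤ ‖x - y‖ / ‖x‖ := by gcongr
    _ = _ := by rw [norm_sub_smul_eq_sqrt x hv0, div_div, mul_comm ‖v‖]

lemma projDist_nonneg (x v : E) : 0 ≤ projDist x v :=
  div_nonneg (Real.sqrt_nonneg _) (by positivity)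

lemma exists_sign_norm_sub_le_projDist {x v : E} (hx : x ≠ 0) (hv : v ≠ 0) :
    ∃ ε : ℝ, |ε| = 1 ∧ ‖‖x‖⁻¹ • x - (ε * ‖v‖⁻¹) • v‖ ≤ √2 * projDist x v := by
  have hxn : 0 < ‖x‖ := norm_pos_iff.2 hx
  have hvn : 0 < ‖v‖ := norm_pos_iff.2 hv
  set c := inner ℝ x v / (‖x‖ * ‖v‖) with hcdef
  have hc : |c| ≤ 1 := abs_real_inner_div_norm_mul_norm_le_one x v
  obtain ⟨ε, hε, hεc⟩ : ∃ ε : ℝ, |ε| = 1 ∧ ε * c = |c| := by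
    rcases le_or_gt 0 c with h | h
    · exact ⟨1, by simp, by simp [abs_of_nonneg h]⟩
    · exact ⟨-1, by simp, by simp [abs_of_neg h]⟩
  have hN : 0 ≤ ‖x‖ ^ 2 * ‖v‖ ^ 2 - inner ℝ x v ^ 2 := by
    nlinarith [abs_real_inner_le_norm x v, abs_nonneg (inner ℝ x v), sq_abs (inner ℝ x v)]
  have hproj : projDist x v ^ 2 = 1 - c ^ 2 := by
    rw [projDist, div_pow, Real.sq_sqrt hN, hcdef]
    field_simp
  have hsq : ‖‖x‖⁻¹ • x - (ε * ‖v‖⁻¹) • v‖ ^ 2 = 2 - 2 * |c| := by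
    rw [norm_sub_sq_real, real_inner_smul_left, real_inner_smul_right, norm_smul, norm_smul,
      Real.norm_eq_abs, Real.norm_eq_abs, abs_mul, hε, abs_inv, abs_inv, abs_norm, abs_norm,
      ← hεc, hcdef]
    field_simp
    ring
  refine ⟨ε, hε, (pow_le_pow_iff_left₀ (norm_nonneg _)
    (mul_nonneg (Real.sqrt_nonneg 2) (projDist_nonneg x v)) two_ne_zero).1 ?_⟩
  rw [hsq, mul_pow, hproj, Real.sq_sqrt zero_le_two]
  nlinarith [abs_nonneg c, sq_abs c]

lemma Theta_le_Theta_add_sum_projDist {m : ℕ} (x v : Fin m → E) (hx : ∀ j, x j ≠ 0)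
    (hv : ∀ j, v j ≠ 0) : Theta v ≤ Theta x + √2 * ∑ j, projDist (x j) (v j) := by
  choose ε hε hclose using fun j => exists_sign_norm_sub_le_projDist (hx j) (hv j)
  set xh := fun j => ‖x j‖⁻¹ • x j
  set vh := fun j => (ε j * ‖v j‖⁻¹) • v j
  have hxh : ∀ j, ‖xh j‖ = 1 := fun j => by simp [xh, norm_smul, hx]
  have hvh : ∀ j, ‖vh j‖ = 1 := fun j => by simp [vh, norm_smul, hε, hv]
  have hΘx : Theta x = gramVol xh := by
    rw [← Theta_of_norm_eq_one hxh, Theta_smul x fun j => inv_ne_zero (norm_ne_zero_iff.2 (hx j))]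
  have hΘv : Theta v = gramVol vh := by
    rw [← Theta_of_norm_eq_one hvh, Theta_smul v fun j => mul_ne_zero
      (abs_ne_zero.1 (by rw [hε j]; exact one_ne_zero)) (inv_ne_zero (norm_ne_zero_iff.2 (hv j)))]
  rw [hΘx, hΘv, mul_sum]
  calc gramVol vh ≤ gramVol xh + ∑ j, ‖vh j - xh j‖ :=
        gramVol_le_add_sum_norm_sub _ _ (fun j => (hvh j).le) fun j => (hxh j).le
    _ ≤ gramVol xh + ∑ j, √2 * projDist (x j) (v j) := by
        gcongr with j
        rw [norm_sub_rev]
        exact hclose j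

end

theorem stmt7_general {m n : ℕ}
    (v : Fin m → EuclideanSpace ℝ (Fin n))
    (δ : ℝ) (hδ0 : 0 ≤ δ) (hδ : δ < Theta v / (2 * m))
    (x : Fin m → EuclideanSpace ℝ (Fin n)) (hx : ∀ j, x j ≠ 0)
    (hdx : ∀ j, projDist (x j) (v j) ≤ δ) :
    subDist (Submodule.span ℝ (Set.range x)) (Submodule.span ℝ (Set.range v)) ≤
      2 * m * δ / Theta x := by
  have hm : (0 : ℝ) < m := by
    rcases Nat.eq_zero_or_pos m with rfl | h
    · simp at hδ
      linarith
    · exact_mod_cast h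
  have hΘv : 2 * m * δ < Theta v := by rwa [lt_div_iff₀ (by positivity), mul_comm] at hδ
  have hv : ∀ j, v j ≠ 0 := fun j hj => by
    nlinarith [Theta_eq_zero_of_eq_zero hj]
  have hsum : ∑ j, projDist (x j) (v j) ≤ m * δ := by
    simpa using sum_le_sum fun j (_ : j ∈ univ) => hdx j
  have hΘx : 0 < Theta x := by
    have hs2 : √2 ≤ 2 := Real.sqrt_le_iff.2 ⟨zero_le_two, by norm_num⟩
    have hpert := Theta_le_Theta_add_sum_projDist x v hx hv
    have := mul_le_mul hs2 hsum (sum_nonneg fun j _ => projDist_nonneg _ _) zero_le_two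
    nlinarith
  refine Real.sSup_le ?_ (by positivity)
  rintro _ ⟨w, hw, -, rfl⟩
  rw [le_div_iff₀ hΘx]
  calc distToSub w _ * Theta x ≤ ∑ j, distToSub (x j) (span ℝ (Set.range v)) :=
        distToSub_mul_Theta_le _ x hw
    _ ≤ ∑ j, projDist (x j) (v j) := sum_le_sum fun j _ =>
        distToSub_le_projDist (subset_span (Set.mem_range_self j)) (hv j) (x j)
    _ ≤ 2 * m * δ := by linarith [mul_nonneg hm.le hδ0]

theorem stmt7 {m n : ℕ} (hm : 1 ≤ m) (hmn : m ≤ n)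
    (v : Fin m → EuclideanSpace ℝ (Fin n)) (hv : LinearIndependent ℝ v)
    (δ : ℝ) (hδ0 : 0 ≤ δ) (hδ : δ < Theta v / (2 * m))
    (x : Fin m → EuclideanSpace ℝ (Fin n)) (hx : ∀ j, x j ≠ 0)
    (hdx : ∀ j, projDist (x j) (v j) ≤ δ) :
    subDist (Submodule.span ℝ (Set.range x)) (Submodule.span ℝ (Set.range v)) ≤
      2 * m * δ / Theta x :=
  stmt7_general v δ hδ0 hδ x hx hdx
end

section
/- Let n = m+2 with m ≥ 1, let Y > 0 be a real number, and let (w_1,…,w_m,u,d) be an orthonormal basis of R^n. Then the set of x ∈ R^n satisfying |x·w_j| ≤ n^{−1/2}Y for j = 1,…,m, |x·u| ≤ εY^{−ρ}, and |x·d| ≤ n^{m/2}ε^{−1}Y^{ρ−m} is a compact symmetric convex body of volume 2^n, and hence contains a nonzero point of Z^n. -/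
/-!
In the coordinates of the orthonormal basis `b` the set is the axis-parallel box with
half-widths `n^{-1/2} Y` (m times), `ε Y^{-ρ}` and `n^{m/2} ε⁻¹ Y^{ρ-m}`, and `b.repr` preserves
volume. The product of the half-widths is `1`, so the box has volume `2^n`, and Minkowski's
theorem for the lattice `ℤ^n`, whose fundamental domain has volume `1`, gives the nonzero
integer point.
-/

open scoped BigOperators

open MeasureTheory Module
open scoped RealInnerProductSpace

section CoordBox

variable {ι E : Type*} [Fintype ι] [NormedAddCommGroup E] [InnerProductSpace ℝ E]

def OrthonormalBasis.coordBox (b : OrthonormalBasis ι ℝ E) (c : ι → ℝ) : Set E :=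
  {x | ∀ i, |⟪x, b i⟫| ≤ c i}

noncomputable def OrthonormalBasis.coordEquiv (b : OrthonormalBasis ι ℝ E) :
    E ≃L[ℝ] (ι → ℝ) :=
  b.repr.toContinuousLinearEquiv.trans (PiLp.continuousLinearEquiv 2 ℝ fun _ => ℝ)

variable (b : OrthonormalBasis ι ℝ E) (c : ι → ℝ)

theorem OrthonormalBasis.coordBox_eq_preimage :
    b.coordBox c = b.coordEquiv ⁻¹' Set.Icc (-c) c := by
  ext x
  simp only [OrthonormalBasis.coordBox, Set.mem_ofPred_eq, Set.mem_preimage, Set.mem_Icc,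
    Pi.le_def, Pi.neg_apply, ← forall_and, abs_le]
  refine forall_congr' fun i => ?_
  rw [show b.coordEquiv x i = ⟪b i, x⟫ from b.repr_apply_apply x i, real_inner_comm]

theorem OrthonormalBasis.isCompact_coordBox : IsCompact (b.coordBox c) := by
  rw [b.coordBox_eq_preimage, ← b.coordEquiv.coe_toHomeomorph, Homeomorph.isCompact_preimage]
  exact isCompact_Icc

theorem OrthonormalBasis.convex_coordBox : Convex ℝ (b.coordBox c) := by
  rw [b.coordBox_eq_preimage]
  exact (convex_Icc _ _).linear_preimage b.coordEquiv.toLinearMap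

theorem OrthonormalBasis.neg_mem_coordBox {x : E} (hx : x ∈ b.coordBox c) :
    -x ∈ b.coordBox c := fun i => by simpa only [inner_neg_left, abs_neg] using hx i

variable [FiniteDimensional ℝ E] [MeasurableSpace E] [BorelSpace E]

theorem OrthonormalBasis.volume_coordBox :
    volume (b.coordBox c) = ∏ i, ENNReal.ofReal (2 * c i) := by
  have hpres : MeasurePreserving b.coordEquiv :=
    (PiLp.volume_preserving_ofLp ι).comp b.measurePreserving_repr
  rw [b.coordBox_eq_preimage, hpres.measure_preimage measurableSet_Icc.nullMeasurableSet,
    Real.volume_Icc_pi]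
  simp only [Pi.neg_apply, sub_neg_eq_add, two_mul]

theorem OrthonormalBasis.volume_coordBox_of_prod_eq_one (hc : 0 ≤ c) (hprod : ∏ i, c i = 1) :
    volume (b.coordBox c) = 2 ^ Fintype.card ι := by
  rw [b.volume_coordBox,
    ← ENNReal.ofReal_prod_of_nonneg fun i _ => mul_nonneg zero_le_two (hc i),
    Finset.prod_mul_distrib, hprod, Finset.prod_const, Finset.card_univ, mul_one,
    ENNReal.ofReal_pow zero_le_two, ENNReal.ofReal_ofNat]

theorem OrthonormalBasis.exists_ne_zero_mem_span_int_of_two_pow_le_volume [Nontrivial E]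
    {s : Set E} (h_symm : ∀ x ∈ s, -x ∈ s) (h_conv : Convex ℝ s)
    (h_cpt : IsCompact s) (h : 2 ^ finrank ℝ E ≤ volume s) :
    ∃ x ∈ Submodule.span ℤ (Set.range b), x ≠ 0 ∧ x ∈ s := by
  have h_fund : volume (ZSpan.fundamentalDomain b.toBasis) = 1 := by
    rw [measure_congr (ZSpan.fundamentalDomain_ae_parallelepiped b.toBasis volume),
      b.coe_toBasis, b.volume_parallelepiped]
  have : Countable (Submodule.span ℤ (Set.range b.toBasis)).toAddSubgroup :=
    inferInstanceAs (Countable (Submodule.span ℤ (Set.range b.toBasis)))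
  obtain ⟨x, hx0, hxs⟩ := exists_ne_zero_mem_lattice_of_measure_mul_two_pow_le_measure
    (L := (Submodule.span ℤ (Set.range b.toBasis)).toAddSubgroup)
    (ZSpan.isAddFundamentalDomain b.toBasis volume) h_symm h_conv h_cpt
    (by rwa [h_fund, one_mul])
  exact ⟨x, x.2, fun h => hx0 (Subtype.ext h), hxs⟩

end CoordBox

theorem exists_toE_eq_of_mem_span_int {n : ℕ} {x : EuclideanSpace ℝ (Fin n)}
    (hx : x ∈ Submodule.span ℤ (Set.range (EuclideanSpace.basisFun (Fin n) ℝ))) :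
    ∃ k : Fin n → ℤ, toE k = x := by
  have hcoord (i : Fin n) : ∃ k : ℤ, (k : ℝ) = x i :=
    ((EuclideanSpace.basisFun (Fin n) ℝ).toBasis.mem_span_iff_repr_mem ℤ x).mp hx i
  choose k hk using hcoord
  exact ⟨k, by ext i; exact hk i⟩

theorem exists_ne_zero_toE_mem_of_two_pow_le_volume {n : ℕ} [NeZero n]
    {s : Set (EuclideanSpace ℝ (Fin n))} (h_symm : ∀ x ∈ s, -x ∈ s) (h_conv : Convex ℝ s)
    (h_cpt : IsCompact s) (h : 2 ^ n ≤ volume s) :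
    ∃ k : Fin n → ℤ, k ≠ 0 ∧ toE k ∈ s := by
  obtain ⟨x, hx, hx0, hxs⟩ :=
    (EuclideanSpace.basisFun (Fin n) ℝ).exists_ne_zero_mem_span_int_of_two_pow_le_volume
      h_symm h_conv h_cpt (by rwa [finrank_euclideanSpace_fin])
  obtain ⟨k, rfl⟩ := exists_toE_eq_of_mem_span_int hx
  refine ⟨k, ?_, hxs⟩
  rintro rfl
  exact hx0 (by ext i; simp [toE])

theorem Fin.forall_add_two_iff {m : ℕ} {P : Fin (m + 2) → Prop} :
    (∀ i, P i) ↔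
      (∀ j : Fin (m + 2), (j : ℕ) < m → P j) ∧ P ⟨m, by omega⟩ ∧ P ⟨m + 1, by omega⟩ := by
  refine ⟨fun h => ⟨fun j _ => h j, h _, h _⟩, fun ⟨hlt, hm, hm1⟩ ⟨i, hi⟩ => ?_⟩
  rcases Nat.lt_or_ge i m with h | h
  · exact hlt _ h
  · obtain rfl | rfl : i = m ∨ i = m + 1 := by omega
    exacts [hm, hm1]

section BoxWidths

variable (m : ℕ) (Y ε ρ : ℝ)

noncomputable def boxWidths : Fin (m + 2) → ℝ := fun i =>
  if (i : ℕ) < m then ((m + 2 : ℕ) : ℝ) ^ (-(1 : ℝ) / 2) * Y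
  else if (i : ℕ) = m then ε * Y ^ (-ρ)
  else ((m + 2 : ℕ) : ℝ) ^ ((m : ℝ) / 2) * ε⁻¹ * Y ^ (ρ - m)

variable {m Y ε ρ}

theorem boxWidths_nonneg (hY : 0 < Y) (hε : 0 < ε) : 0 ≤ boxWidths m Y ε ρ := fun i => by
  unfold boxWidths
  split_ifs <;> positivity

theorem prod_boxWidths (hY : 0 < Y) (hε : ε ≠ 0) : ∏ i, boxWidths m Y ε ρ i = 1 := by
  set N : ℝ := ((m + 2 : ℕ) : ℝ)
  have hN : 0 < N := by positivity
  have hN_pow : (N ^ (-(1 : ℝ) / 2)) ^ m * N ^ ((m : ℝ) / 2) = 1 := by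
    rw [← Real.rpow_natCast, ← Real.rpow_mul hN.le, ← Real.rpow_add hN]
    ring_nf
    exact Real.rpow_zero N
  have hY_pow : Y ^ m * Y ^ (-ρ) * Y ^ (ρ - m) = 1 := by
    rw [← Real.rpow_natCast, ← Real.rpow_add hY, ← Real.rpow_add hY]
    ring_nf
    exact Real.rpow_zero Y
  rw [Fin.prod_univ_castSucc, Fin.prod_univ_castSucc]
  simp only [boxWidths, Fin.val_castSucc, Fin.is_lt, ↓reduceIte, Finset.prod_const,
    Finset.card_univ, Fintype.card_fin, Fin.val_last, lt_self_iff_false, add_lt_iff_neg_left,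
    not_lt_zero, Nat.add_eq_left, one_ne_zero]
  calc (N ^ (-(1 : ℝ) / 2) * Y) ^ m * (ε * Y ^ (-ρ)) * (N ^ ((m : ℝ) / 2) * ε⁻¹ * Y ^ (ρ - m))
      = ((N ^ (-(1 : ℝ) / 2)) ^ m * N ^ ((m : ℝ) / 2)) * (Y ^ m * Y ^ (-ρ) * Y ^ (ρ - m)) *
          (ε * ε⁻¹) := by ring
    _ = 1 := by rw [hN_pow, hY_pow, mul_inv_cancel₀ hε, one_mul, one_mul]

end BoxWidths

theorem stmt18 {m : ℕ} {n : ℕ} (hn : n = m + 2)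
    (b : OrthonormalBasis (Fin n) ℝ (EuclideanSpace ℝ (Fin n)))
    (Y ε ρ : ℝ) (hY : 0 < Y) (hε : 0 < ε)
    (S : Set (EuclideanSpace ℝ (Fin n)))
    (hS : S = {x : EuclideanSpace ℝ (Fin n) |
      (∀ j : Fin n, (j : ℕ) < m → |(inner ℝ x (b j) : ℝ)| ≤ (n : ℝ) ^ (-(1 : ℝ) / 2) * Y) ∧
      |(inner ℝ x (b ⟨m, by omega⟩) : ℝ)| ≤ ε * Y ^ (-ρ) ∧
      |(inner ℝ x (b ⟨m + 1, by omega⟩) : ℝ)| ≤ (n : ℝ) ^ ((m : ℝ) / 2) * ε⁻¹ * Y ^ (ρ - m)}) :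
    IsCompact S ∧ Convex ℝ S ∧ (∀ x ∈ S, -x ∈ S) ∧
      MeasureTheory.volume S = 2 ^ n ∧
      ∃ x : Fin n → ℤ, x ≠ 0 ∧ toE x ∈ S := by
  subst hn
  have hS_box : S = b.coordBox (boxWidths m Y ε ρ) := by
    ext x
    rw [hS, OrthonormalBasis.coordBox, Set.mem_ofPred_eq, Set.mem_ofPred_eq,
      Fin.forall_add_two_iff (P := fun i => |⟪x, b i⟫| ≤ boxWidths m Y ε ρ i)]
    simp +contextual only [Nat.cast_add, Nat.cast_ofNat, boxWidths, ↓reduceIte,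
      lt_self_iff_false, add_lt_iff_neg_left, not_lt_zero, Nat.add_eq_left, one_ne_zero]
  have h_vol : volume S = 2 ^ (m + 2) := by
    rw [hS_box, b.volume_coordBox_of_prod_eq_one _ (boxWidths_nonneg hY hε)
      (prod_boxWidths hY hε.ne'), Fintype.card_fin]
  subst hS_box
  exact ⟨b.isCompact_coordBox _, b.convex_coordBox _, fun _ => b.neg_mem_coordBox _, h_vol,
    exists_ne_zero_toE_mem_of_two_pow_le_volume (fun _ => b.neg_mem_coordBox _)
      (b.convex_coordBox _) (b.isCompact_coordBox _) h_vol.ge⟩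
end
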